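/- arXiv:2407.19071 — 6 statements merged into one kernel-verified Lean document; each statement's English description precedes it below -/
import Mathlib

section
/- Let A be an n×n real matrix, B an n×m real matrix, Φ a p×n real matrix, and M an m×p real matrix with M Φ B = I_m. Let g̃, ξ̃, ω ∈ ℝⁿ, ν ∈ ℝᵖ, d, d̂ ∈ ℝᵐ be vectors. Define ξ := g̃ + A ξ̃ + B d + ω, ζ := Φ ξ + ν, ζ̂ := Φ (g̃ + B d̂), Δ̂ := M (ζ − ζ̂), and the corrected state prediction ξ̂_pred := g̃ + B (d̂ + Δ̂). Then ξ − ξ̂_pred = (I − B M Φ) A ξ̃ + (I − B M Φ) ω − B M ν. -/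
open Matrix

/-- Prediction-error identity (equation (12)) of the SSIE algorithm: if `M Φ B = I`,
then the corrected one-step state prediction `ξ̂_pred = g̃ + B (d̂ + Δ̂)` satisfies
`ξ − ξ̂_pred = (I − B M Φ) A ξ̃ + (I − B M Φ) ω − B M ν`. -/
theorem ssie_prediction_error {n m p : ℕ}
    (A : Matrix (Fin n) (Fin n) ℝ) (B : Matrix (Fin n) (Fin m) ℝ)
    (Φ : Matrix (Fin p) (Fin n) ℝ) (M : Matrix (Fin m) (Fin p) ℝ)
    (hM : M * Φ * B = 1)
    (gt ξt ω : Fin n → ℝ) (ν : Fin p → ℝ) (d dh : Fin m → ℝ)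
    (ξ : Fin n → ℝ) (hξ : ξ = gt + A.mulVec ξt + B.mulVec d + ω)
    (ζ : Fin p → ℝ) (hζ : ζ = Φ.mulVec ξ + ν)
    (ζh : Fin p → ℝ) (hζh : ζh = Φ.mulVec (gt + B.mulVec dh))
    (Δh : Fin m → ℝ) (hΔh : Δh = M.mulVec (ζ - ζh))
    (ξpred : Fin n → ℝ) (hξpred : ξpred = gt + B.mulVec (dh + Δh)) :
    ξ - ξpred
      = ((1 - B * M * Φ) * A).mulVec ξt + (1 - B * M * Φ).mulVec ω
        - (B * M).mulVec ν := by
  subst hξ hζ hζh hΔh hξpred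
  have h2 : M * (Φ * B) = 1 := by rw [← Matrix.mul_assoc, hM]
  simp only [Matrix.mulVec_add, Matrix.mulVec_sub, Matrix.sub_mulVec, Matrix.one_mulVec,
    Matrix.sub_mul, Matrix.one_mul, Matrix.mulVec_mulVec, Matrix.mul_assoc, h2, Matrix.mul_one]
  abel
end

section
/- Let Σ_pred be an n×n real symmetric matrix, R a p×p real symmetric matrix, K an n×p real matrix, and Φ a p×n real matrix. For an n×p real matrix L define f(L) := (I − L Φ) Σ_pred (I − L Φ)ᵀ + L R Lᵀ + (I − L Φ) K Lᵀ + L Kᵀ (I − L Φ)ᵀ, and set G := R + Φ Σ_pred Φᵀ − Φ K − Kᵀ Φᵀ. Then for every L, Tr f(L) = Tr f(L*) + Tr((L − L*) G (L − L*)ᵀ), where L* := (Σ_pred Φᵀ − K) G⁻¹, provided G is invertible. -/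
open Matrix

/-- The posterior covariance of the SSIE state estimate as a function of the gain `L`:
`f(L) = (I − L Φ) Σ_pred (I − L Φ)ᵀ + L R Lᵀ + (I − L Φ) K Lᵀ + L Kᵀ (I − L Φ)ᵀ`. -/
def postCov {n p : ℕ} (Spred : Matrix (Fin n) (Fin n) ℝ) (R : Matrix (Fin p) (Fin p) ℝ)
    (K : Matrix (Fin n) (Fin p) ℝ) (Φ : Matrix (Fin p) (Fin n) ℝ)
    (L : Matrix (Fin n) (Fin p) ℝ) : Matrix (Fin n) (Fin n) ℝ :=
  (1 - L * Φ) * Spred * (1 - L * Φ)ᵀ + L * R * Lᵀ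
    + (1 - L * Φ) * K * Lᵀ + L * Kᵀ * (1 - L * Φ)ᵀ

/-- Completing-the-square identity behind Proposition 3: for symmetric `Σ_pred` and `R`,
with `G = R + Φ Σ_pred Φᵀ − Φ K − Kᵀ Φᵀ` invertible and `L* = (Σ_pred Φᵀ − K) G⁻¹`, every
gain `L` satisfies `Tr f(L) = Tr f(L*) + Tr((L − L*) G (L − L*)ᵀ)`. -/
theorem ssie_gain_complete_square {n p : ℕ}
    (Spred : Matrix (Fin n) (Fin n) ℝ) (R : Matrix (Fin p) (Fin p) ℝ)
    (K : Matrix (Fin n) (Fin p) ℝ) (Φ : Matrix (Fin p) (Fin n) ℝ)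
    (hS : Spredᵀ = Spred) (hR : Rᵀ = R)
    (G : Matrix (Fin p) (Fin p) ℝ)
    (hG : G = R + Φ * Spred * Φᵀ - Φ * K - Kᵀ * Φᵀ)
    (hGinv : IsUnit G)
    (Lstar : Matrix (Fin n) (Fin p) ℝ)
    (hLstar : Lstar = (Spred * Φᵀ - K) * G⁻¹) :
    ∀ L : Matrix (Fin n) (Fin p) ℝ,
      (postCov Spred R K Φ L).trace
        = (postCov Spred R K Φ Lstar).trace
          + ((L - Lstar) * G * (L - Lstar)ᵀ).trace := by
  intro L
  have hGsym : Gᵀ = G := by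
    subst hG
    simp only [transpose_sub, transpose_add, transpose_mul, transpose_transpose, hS, hR]
    rw [Matrix.mul_assoc]
    abel
  have hA1 : Lstar * G = Spred * Φᵀ - K := by
    rw [hLstar, Matrix.mul_assoc, Matrix.nonsing_inv_mul G
      ((Matrix.isUnit_iff_isUnit_det G).mp hGinv), Matrix.mul_one]
  have key : ∀ M : Matrix (Fin n) (Fin p) ℝ,
      postCov Spred R K Φ M
        = Spred + M * G * Mᵀ - M * (Spred * Φᵀ - K)ᵀ - (Spred * Φᵀ - K) * Mᵀ := by
    intro M
    unfold postCov
    subst hG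
    simp only [transpose_sub, transpose_mul, transpose_transpose, transpose_one, hS]
    simp only [Matrix.mul_add, Matrix.add_mul, Matrix.mul_sub, Matrix.sub_mul,
      Matrix.mul_assoc, Matrix.one_mul, Matrix.mul_one, sub_eq_add_neg, neg_add_rev, neg_neg,
      Matrix.neg_mul, Matrix.mul_neg, transpose_add, transpose_smul, transpose_neg, smul_add, Matrix.mul_smul, Matrix.smul_mul]
    abel
  have hmat : postCov Spred R K Φ L
      = postCov Spred R K Φ Lstar + (L - Lstar) * G * (L - Lstar)ᵀ := by
    rw [key L, key Lstar, ← hA1]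
    simp only [transpose_mul, hGsym]
    simp only [Matrix.mul_add, Matrix.add_mul, Matrix.mul_sub, Matrix.sub_mul,
      Matrix.mul_assoc, Matrix.one_mul, Matrix.mul_one, sub_eq_add_neg, neg_add_rev, neg_neg,
      Matrix.neg_mul, Matrix.mul_neg, transpose_add, transpose_smul, transpose_neg, smul_add, Matrix.mul_smul, Matrix.smul_mul]
    abel
  rw [hmat, Matrix.trace_add]
end

section
/- Let Σ_pred be an n×n real symmetric positive semidefinite matrix, R a p×p real symmetric matrix, K an n×p real matrix, and Φ a p×n real matrix. For an n×p real matrix L define f(L) := (I − L Φ) Σ_pred (I − L Φ)ᵀ + L R Lᵀ + (I − L Φ) K Lᵀ + L Kᵀ (I − L Φ)ᵀ, and set G := R + Φ Σ_pred Φᵀ − Φ K − Kᵀ Φᵀ. If G is positive definite, then L* := (Σ_pred Φᵀ − K) G⁻¹ is the unique global minimizer of the function L ↦ Tr f(L) over all n×p real matrices: Tr f(L*) ≤ Tr f(L) for all L, with equality only if L = L*. -/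
/-!
Expanding `f(L)` gives `Σ_pred + L G Lᵀ − L Cᵀ − C Lᵀ` with `C = Σ_pred Φᵀ − K`. Since `L* G = C`
and `G` is symmetric, completing the square yields `f(L) = f(L*) + (L − L*) G (L − L*)ᵀ`, and for
positive definite `G` the trace of `M G Mᵀ` is nonnegative and vanishes only at `M = 0`.
-/

open Matrix
open scoped ComplexOrder

namespace Matrix

section CompleteSquare

variable {m n α : Type*} [Fintype n] [CommRing α]

theorem mul_mul_transpose_sub_sub_eq_of_mul_eq {G : Matrix n n α} {L₀ C : Matrix m n α}
    (hG : Gᵀ = G) (hL₀ : L₀ * G = C) (L : Matrix m n α) :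
    L * G * Lᵀ - L * Cᵀ - C * Lᵀ = (L - L₀) * G * (L - L₀)ᵀ - L₀ * G * L₀ᵀ := by
  subst hL₀
  simp only [transpose_sub, transpose_mul, hG, Matrix.sub_mul, Matrix.mul_sub, Matrix.mul_assoc]
  abel

end CompleteSquare

section PosDef

variable {m n 𝕜 : Type*} [Fintype n] [RCLike 𝕜]

theorem mul_mul_conjTranspose_apply_self (M : Matrix m n 𝕜) (G : Matrix n n 𝕜) (i : m) :
    (M * G * Mᴴ) i i = star (star (M i)) ⬝ᵥ G *ᵥ star (M i) := by
  rw [star_star, dotProduct_mulVec, mul_apply']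
  rfl

theorem PosDef.mul_mul_conjTranspose_eq_zero_iff {G : Matrix n n 𝕜} (hG : G.PosDef)
    {M : Matrix m n 𝕜} : M * G * Mᴴ = 0 ↔ M = 0 := by
  refine ⟨fun h => ?_, fun h => by simp [h]⟩
  funext i
  by_contra hMi
  have hpos := hG.dotProduct_mulVec_pos (star_ne_zero.mpr hMi)
  rw [← mul_mul_conjTranspose_apply_self, h] at hpos
  exact hpos.ne rfl

theorem PosDef.trace_mul_mul_conjTranspose_eq_zero_iff [Fintype m] {G : Matrix n n 𝕜}
    (hG : G.PosDef) {M : Matrix m n 𝕜} : (M * G * Mᴴ).trace = 0 ↔ M = 0 := by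
  rw [(hG.posSemidef.mul_mul_conjTranspose_same M).trace_eq_zero_iff,
    hG.mul_mul_conjTranspose_eq_zero_iff]

end PosDef

end Matrix

section PostCov

variable {n p : ℕ} (Spred : Matrix (Fin n) (Fin n) ℝ) (R : Matrix (Fin p) (Fin p) ℝ)
  (K : Matrix (Fin n) (Fin p) ℝ) (Φ : Matrix (Fin p) (Fin n) ℝ)

theorem postCov_eq (L : Matrix (Fin n) (Fin p) ℝ) :
    postCov Spred R K Φ L = Spred + L * (R + Φ * Spred * Φᵀ - Φ * K - Kᵀ * Φᵀ) * Lᵀ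
      - L * (Φ * Spred - Kᵀ) - (Spred * Φᵀ - K) * Lᵀ := by
  simp only [postCov, transpose_sub, transpose_one, transpose_mul, Matrix.sub_mul, Matrix.mul_sub,
    Matrix.add_mul, Matrix.mul_add, Matrix.one_mul, Matrix.mul_one, Matrix.mul_assoc]
  abel

variable {Spred R K Φ}

theorem postCov_eq_postCov_add {G : Matrix (Fin p) (Fin p) ℝ} {L₀ : Matrix (Fin n) (Fin p) ℝ}
    (hS : Spredᵀ = Spred) (hGt : Gᵀ = G)
    (hG : G = R + Φ * Spred * Φᵀ - Φ * K - Kᵀ * Φᵀ) (hL₀ : L₀ * G = Spred * Φᵀ - K)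
    (L : Matrix (Fin n) (Fin p) ℝ) :
    postCov Spred R K Φ L = postCov Spred R K Φ L₀ + (L - L₀) * G * (L - L₀)ᵀ := by
  have hC : Φ * Spred - Kᵀ = (Spred * Φᵀ - K)ᵀ := by
    rw [transpose_sub, transpose_mul, transpose_transpose, hS]
  rw [postCov_eq, postCov_eq, ← hG, hC]
  simp only [add_sub_assoc]
  rw [mul_mul_transpose_sub_sub_eq_of_mul_eq hGt hL₀, mul_mul_transpose_sub_sub_eq_of_mul_eq hGt hL₀,
    sub_self, Matrix.zero_mul, Matrix.zero_mul]
  abel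

end PostCov

theorem ssie_optimal_gain_general {n p : ℕ}
    (Spred : Matrix (Fin n) (Fin n) ℝ) (R : Matrix (Fin p) (Fin p) ℝ)
    (K : Matrix (Fin n) (Fin p) ℝ) (Φ : Matrix (Fin p) (Fin n) ℝ)
    (hS : Spred.PosSemidef)
    (G : Matrix (Fin p) (Fin p) ℝ)
    (hG : G = R + Φ * Spred * Φᵀ - Φ * K - Kᵀ * Φᵀ)
    (hGpd : G.PosDef)
    (Lstar : Matrix (Fin n) (Fin p) ℝ)
    (hLstar : Lstar = (Spred * Φᵀ - K) * G⁻¹) :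
    ∀ L : Matrix (Fin n) (Fin p) ℝ,
      (postCov Spred R K Φ Lstar).trace ≤ (postCov Spred R K Φ L).trace ∧
        ((postCov Spred R K Φ Lstar).trace = (postCov Spred R K Φ L).trace → L = Lstar) := by
  intro L
  have hSt : Spredᵀ = Spred := by simpa using hS.isHermitian.eq
  have hGt : Gᵀ = G := by simpa using hGpd.isHermitian.eq
  have hLG : Lstar * G = Spred * Φᵀ - K := by
    rw [hLstar, nonsing_inv_mul_cancel_right _ _ ((isUnit_iff_isUnit_det G).mp hGpd.isUnit)]
  rw [postCov_eq_postCov_add hSt hGt hG hLG L, trace_add,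
    ← conjTranspose_eq_transpose_of_trivial]
  have hnonneg := (hGpd.posSemidef.mul_mul_conjTranspose_same (L - Lstar)).trace_nonneg
  refine ⟨le_add_of_nonneg_right hnonneg, fun h => ?_⟩
  rw [← sub_eq_zero, ← hGpd.trace_mul_mul_conjTranspose_eq_zero_iff]
  linarith

/-- Proposition 3: for symmetric positive semidefinite `Σ_pred`, symmetric `R`, and
`G = R + Φ Σ_pred Φᵀ − Φ K − Kᵀ Φᵀ` positive definite, the gain
`L* = (Σ_pred Φᵀ − K) G⁻¹` is the unique global minimizer of `L ↦ Tr f(L)`. -/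
theorem ssie_optimal_gain {n p : ℕ}
    (Spred : Matrix (Fin n) (Fin n) ℝ) (R : Matrix (Fin p) (Fin p) ℝ)
    (K : Matrix (Fin n) (Fin p) ℝ) (Φ : Matrix (Fin p) (Fin n) ℝ)
    (hS : Spred.PosSemidef) (hR : Rᵀ = R)
    (G : Matrix (Fin p) (Fin p) ℝ)
    (hG : G = R + Φ * Spred * Φᵀ - Φ * K - Kᵀ * Φᵀ)
    (hGpd : G.PosDef)
    (Lstar : Matrix (Fin n) (Fin p) ℝ)
    (hLstar : Lstar = (Spred * Φᵀ - K) * G⁻¹) :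
    ∀ L : Matrix (Fin n) (Fin p) ℝ,
      (postCov Spred R K Φ Lstar).trace ≤ (postCov Spred R K Φ L).trace ∧
        ((postCov Spred R K Φ Lstar).trace = (postCov Spred R K Φ L).trace → L = Lstar) :=
  ssie_optimal_gain_general Spred R K Φ hS G hG hGpd Lstar hLstar
end

section
/- Let P and Q be probability measures on ℝ with finite second moments, with means μ₁ := ∫ x dP(x), μ₂ := ∫ y dQ(y) and standard deviations σ₁, σ₂ (the nonnegative square roots of their variances). Then for every coupling ψ of P and Q, ∫_{ℝ×ℝ} (x − y)² dψ(x, y) ≥ (μ₁ − μ₂)² + (σ₁ − σ₂)². -/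
/-!
Regard a coupling `ψ` as the joint law of `(X, Y) = (z.1, z.2)`. Then
`E[(X - Y)²] = (E X - E Y)² + Var (X - Y)` and
`Var (X - Y) = σ₁² - 2 Cov (X, Y) + σ₂² ≥ (σ₁ - σ₂)²`,
the last step being Cauchy–Schwarz `Cov (X, Y) ≤ σ₁ σ₂`.
-/

open MeasureTheory ProbabilityTheory

namespace ProbabilityTheory

variable {Ω : Type*} {mΩ : MeasurableSpace Ω} {μ : Measure Ω} {X Y : Ω → ℝ}

lemma covariance_le_sqrt_variance_mul_sqrt_variance [IsFiniteMeasure μ]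
    (hX : MemLp X 2 μ) (hY : MemLp Y 2 μ) :
    cov[X, Y; μ] ≤ √Var[X; μ] * √Var[Y; μ] := by
  -- `t ↦ Var[t • X - Y]` is a nonnegative quadratic polynomial in `t`.
  have hquad : ∀ t : ℝ, 0 ≤ Var[X; μ] * (t * t) + (-2 * cov[X, Y; μ]) * t + Var[Y; μ] := by
    intro t
    have h := variance_nonneg (t • X - Y) μ
    rw [variance_sub (hX.const_smul t) hY, variance_smul, covariance_smul_left] at h
    linarith
  have hdiscrim := discrim_le_zero hquad
  rw [discrim] at hdiscrim
  calc cov[X, Y; μ] ≤ |cov[X, Y; μ]| := le_abs_self _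
    _ ≤ √(Var[X; μ] * Var[Y; μ]) := Real.abs_le_sqrt (by linarith)
    _ = √Var[X; μ] * √Var[Y; μ] := Real.sqrt_mul (variance_nonneg X μ) _

lemma sq_sqrt_variance_sub_sqrt_variance_le_variance_sub [IsFiniteMeasure μ]
    (hX : MemLp X 2 μ) (hY : MemLp Y 2 μ) :
    (√Var[X; μ] - √Var[Y; μ]) ^ 2 ≤ Var[X - Y; μ] := by
  rw [variance_sub hX hY, sub_sq, Real.sq_sqrt (variance_nonneg X μ),
    Real.sq_sqrt (variance_nonneg Y μ)]
  linarith [covariance_le_sqrt_variance_mul_sqrt_variance hX hY]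

lemma sq_integral_sub_add_sq_sqrt_variance_sub_le [IsProbabilityMeasure μ]
    (hX : MemLp X 2 μ) (hY : MemLp Y 2 μ) :
    (μ[X] - μ[Y]) ^ 2 + (√Var[X; μ] - √Var[Y; μ]) ^ 2 ≤ ∫ ω, (X ω - Y ω) ^ 2 ∂μ := by
  have hmean : μ[X - Y] = μ[X] - μ[Y] :=
    integral_sub (hX.integrable one_le_two) (hY.integrable one_le_two)
  have hsecond : ∫ ω, (X ω - Y ω) ^ 2 ∂μ = μ[X - Y] ^ 2 + Var[X - Y; μ] := by
    rw [variance_eq_sub (hX.sub hY)]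
    simp
  rw [hsecond, hmean]
  linarith [sq_sqrt_variance_sub_sqrt_variance_le_variance_sub hX hY]

lemma memLp_two_of_integrable_sq_map (hX : AEMeasurable X μ)
    (h : Integrable (fun x => x ^ 2) (μ.map X)) : MemLp X 2 μ :=
  (memLp_map_measure_iff aestronglyMeasurable_id hX).1
    ((memLp_two_iff_integrable_sq aestronglyMeasurable_id).2 h)

lemma integral_id_map (hX : AEMeasurable X μ) : ∫ x, x ∂(μ.map X) = μ[X] :=
  integral_map hX aestronglyMeasurable_id

lemma variance_eq_integral_map (hX : AEMeasurable X μ) :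
    Var[X; μ] = ∫ x, (x - ∫ y, y ∂(μ.map X)) ^ 2 ∂(μ.map X) := by
  rw [← variance_id_map hX, variance_eq_integral aemeasurable_id]
  rfl

end ProbabilityTheory

theorem gelbrich_bound_one_dim_general
    (P Q : Measure ℝ)
    (hP2 : Integrable (fun x => x ^ 2) P) (hQ2 : Integrable (fun x => x ^ 2) Q)
    (μ₁ μ₂ σ₁ σ₂ : ℝ)
    (hμ₁ : μ₁ = ∫ x, x ∂P) (hμ₂ : μ₂ = ∫ y, y ∂Q)
    (hσ₁ : σ₁ = Real.sqrt (∫ x, (x - μ₁) ^ 2 ∂P))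
    (hσ₂ : σ₂ = Real.sqrt (∫ y, (y - μ₂) ^ 2 ∂Q))
    (ψ : Measure (ℝ × ℝ)) [IsProbabilityMeasure ψ]
    (hψ₁ : ψ.map Prod.fst = P) (hψ₂ : ψ.map Prod.snd = Q) :
    (μ₁ - μ₂) ^ 2 + (σ₁ - σ₂) ^ 2 ≤ ∫ z, (z.1 - z.2) ^ 2 ∂ψ := by
  subst hψ₁ hψ₂
  have hfst : AEMeasurable Prod.fst ψ := measurable_fst.aemeasurable
  have hsnd : AEMeasurable Prod.snd ψ := measurable_snd.aemeasurable
  have hbound := sq_integral_sub_add_sq_sqrt_variance_sub_le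
    (memLp_two_of_integrable_sq_map hfst hP2) (memLp_two_of_integrable_sq_map hsnd hQ2)
  rwa [variance_eq_integral_map hfst, variance_eq_integral_map hsnd, ← integral_id_map hfst,
    ← integral_id_map hsnd, ← hμ₁, ← hμ₂, ← hσ₁, ← hσ₂] at hbound

/-- One-dimensional Gelbrich bound (Lemma 1): for probability measures `P, Q` on `ℝ`
with finite second moments, means `μ₁, μ₂` and standard deviations `σ₁, σ₂`, every
coupling `ψ` of `P` and `Q` satisfies
`∫ (x − y)² dψ(x, y) ≥ (μ₁ − μ₂)² + (σ₁ − σ₂)²`. -/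
theorem gelbrich_bound_one_dim
    (P Q : Measure ℝ) [IsProbabilityMeasure P] [IsProbabilityMeasure Q]
    (hP2 : Integrable (fun x => x ^ 2) P) (hQ2 : Integrable (fun x => x ^ 2) Q)
    (μ₁ μ₂ σ₁ σ₂ : ℝ)
    (hμ₁ : μ₁ = ∫ x, x ∂P) (hμ₂ : μ₂ = ∫ y, y ∂Q)
    (hσ₁ : σ₁ = Real.sqrt (∫ x, (x - μ₁) ^ 2 ∂P))
    (hσ₂ : σ₂ = Real.sqrt (∫ y, (y - μ₂) ^ 2 ∂Q))
    (ψ : Measure (ℝ × ℝ)) [IsProbabilityMeasure ψ]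
    (hψ₁ : ψ.map Prod.fst = P) (hψ₂ : ψ.map Prod.snd = Q) :
    (μ₁ - μ₂) ^ 2 + (σ₁ - σ₂) ^ 2 ≤ ∫ z, (z.1 - z.2) ^ 2 ∂ψ :=
  gelbrich_bound_one_dim_general P Q hP2 hQ2 μ₁ μ₂ σ₁ σ₂ hμ₁ hμ₂ hσ₁ hσ₂ ψ hψ₁ hψ₂
end

section
/- Let P be a probability measure on ℝ with finite second moment, mean μ := ∫ x dP(x) and standard deviation σ (the nonnegative square root of the variance), and let α ∈ [0, 1). Define CVaR_α(P) := inf over z ∈ ℝ of ( z + (1/(1−α)) ∫ max(x − z, 0) dP(x) ). Then CVaR_α(P) ≤ μ + √(α/(1−α)) · σ. -/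
open MeasureTheory

/-- The conditional value at risk of a probability measure `P` on `ℝ` at level `α`:
`CVaR_α(P) = inf_{z ∈ ℝ} ( z + (1/(1−α)) ∫ max(x − z, 0) dP(x) )`. -/
noncomputable def cvar (α : ℝ) (P : MeasureTheory.Measure ℝ) : ℝ :=
  ⨅ z : ℝ, (z + (1 / (1 - α)) * ∫ x, max (x - z) 0 ∂P)

/-!
For `a > 0` the hinge `max t 0` lies below the parabola `(t + a)² / (4a)`, so integrating at
`z = μ - a + 2aα` gives `CVaR_α(P) ≤ μ + aα + σ² / (4a(1 - α))` for every `a > 0`, and by AM-GM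
the infimum of the right-hand side over `a > 0` is `μ + √(α / (1 - α)) σ`.
-/

open ProbabilityTheory Filter Topology

lemma max_zero_le_sq_add_div {a : ℝ} (ha : 0 < a) (t : ℝ) : max t 0 ≤ (t + a) ^ 2 / (4 * a) := by
  refine max_le ?_ (by positivity)
  rw [le_div_iff₀ (by positivity)]
  nlinarith [sq_nonneg (t - a)]

lemma le_two_mul_of_forall_le_mul_sq_add_sq_div {u v c : ℝ} (hu : 0 ≤ u) (hv : 0 ≤ v)
    (h : ∀ a > 0, c ≤ a * u ^ 2 + v ^ 2 / a) : c ≤ 2 * u * v := by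
  have hlim : Tendsto (fun ε => 2 * (u + ε) * (v + ε)) (𝓝[>] 0) (𝓝 (2 * u * v)) := by
    have hcont : Continuous fun ε : ℝ => 2 * (u + ε) * (v + ε) := by fun_prop
    simpa using (hcont.tendsto 0).mono_left nhdsWithin_le_nhds
  refine ge_of_tendsto hlim (eventually_nhdsWithin_of_forall fun ε (hε : 0 < ε) => ?_)
  have hu' : 0 < u + ε := by positivity
  have hv' : 0 < v + ε := by positivity
  -- Perturbing `u, v` to positive values lets the AM-GM minimiser `a = v / u` be used.
  calc c ≤ (v + ε) / (u + ε) * u ^ 2 + v ^ 2 / ((v + ε) / (u + ε)) := h _ (by positivity)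
    _ ≤ (v + ε) / (u + ε) * (u + ε) ^ 2 + (v + ε) ^ 2 / ((v + ε) / (u + ε)) := by
        gcongr <;> linarith
    _ = 2 * (u + ε) * (v + ε) := by field_simp; ring

section

variable {Ω : Type*} [MeasurableSpace Ω] {P : Measure Ω} [IsProbabilityMeasure P] {X : Ω → ℝ}

lemma integral_sub_const (hX : Integrable X P) (c : ℝ) : ∫ ω, (X ω - c) ∂P = P[X] - c := by
  simp [integral_sub hX (integrable_const c)]

lemma integral_sub_const_sq (hX : MemLp X 2 P) (c : ℝ) :
    ∫ ω, (X ω - c) ^ 2 ∂P = Var[X; P] + (P[X] - c) ^ 2 := by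
  have hXc : MemLp (fun ω => X ω - c) 2 P := hX.sub (memLp_const c)
  rw [← variance_sub_const hX.aestronglyMeasurable c, variance_eq_sub hXc,
    integral_sub_const (hX.integrable one_le_two)]
  simp

lemma integral_max_sub_le (hX : MemLp X 2 P) (z : ℝ) {a : ℝ} (ha : 0 < a) :
    ∫ ω, max (X ω - z) 0 ∂P ≤ (Var[X; P] + (P[X] - z + a) ^ 2) / (4 * a) := by
  have hsq : Integrable (fun ω => (X ω - (z - a)) ^ 2 / (4 * a)) P :=
    ((hX.sub (memLp_const _)).integrable_sq).div_const _
  calc ∫ ω, max (X ω - z) 0 ∂P ≤ ∫ ω, (X ω - (z - a)) ^ 2 / (4 * a) ∂P := by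
        refine integral_mono_of_nonneg (ae_of_all _ fun ω => le_max_right _ _) hsq
          (ae_of_all _ fun ω => ?_)
        simpa [sub_add] using max_zero_le_sq_add_div ha (X ω - z)
    _ = (Var[X; P] + (P[X] - z + a) ^ 2) / (4 * a) := by
        rw [integral_div, integral_sub_const_sq hX]
        ring

lemma integral_le_add_mul_integral_max_sub (hX : Integrable X P) {c : ℝ} (hc : 1 ≤ c) (z : ℝ) :
    P[X] ≤ z + c * ∫ ω, max (X ω - z) 0 ∂P := by
  have hmax : P[X] - z ≤ ∫ ω, max (X ω - z) 0 ∂P := by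
    rw [← integral_sub_const hX]
    exact integral_mono (hX.sub (integrable_const z)) (hX.sub (integrable_const z)).pos_part
      fun ω => le_max_left _ _
  have hc' : ∫ ω, max (X ω - z) 0 ∂P ≤ c * ∫ ω, max (X ω - z) 0 ∂P :=
    le_mul_of_one_le_left (integral_nonneg fun ω => le_max_right _ _) hc
  linarith

end

lemma cvar_le {α : ℝ} (hα : α ∈ Set.Ico (0 : ℝ) 1) {P : Measure ℝ} [IsProbabilityMeasure P]
    (hP : Integrable (fun x : ℝ => x) P) (z : ℝ) :
    cvar α P ≤ z + (1 / (1 - α)) * ∫ x, max (x - z) 0 ∂P := by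
  have hc : 1 ≤ 1 / (1 - α) := one_le_one_div (by linarith [hα.2]) (by linarith [hα.1])
  exact ciInf_le ⟨∫ x, x ∂P, by
    rintro _ ⟨z, rfl⟩
    exact integral_le_add_mul_integral_max_sub hP hc z⟩ z

lemma cvar_le_integral_add_mul_add_div {α : ℝ} (hα : α ∈ Set.Ico (0 : ℝ) 1) {P : Measure ℝ}
    [IsProbabilityMeasure P] (hP : MemLp (fun x : ℝ => x) 2 P) {a : ℝ} (ha : 0 < a) :
    cvar α P ≤ (∫ x, x ∂P) + a * α + Var[fun x : ℝ => x; P] / (4 * (1 - α)) / a := by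
  have h1α : 0 < 1 - α := by linarith [hα.2]
  set m := ∫ x, x ∂P
  set z := m - a + 2 * a * α
  calc cvar α P ≤ z + (1 / (1 - α)) * ∫ x, max (x - z) 0 ∂P :=
        cvar_le hα (hP.integrable one_le_two) z
    _ ≤ z + (1 / (1 - α)) * ((Var[fun x : ℝ => x; P] + (m - z + a) ^ 2) / (4 * a)) := by
        gcongr
        exact integral_max_sub_le hP z ha
    _ = m + a * α + Var[fun x : ℝ => x; P] / (4 * (1 - α)) / a := by
        field_simp
        ring

/-- Chebyshev–Cantelli bound on CVaR (upper-bound half of the worst-case CVaR formula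
used in Theorem 1): for a probability measure `P` on `ℝ` with finite second moment,
mean `μ` and standard deviation `σ`, and `α ∈ [0, 1)`,
`CVaR_α(P) ≤ μ + √(α/(1−α)) σ`. -/
theorem cvar_le_mean_add_gamma_stddev
    (P : Measure ℝ) [IsProbabilityMeasure P]
    (hP2 : Integrable (fun x => x ^ 2) P)
    (μ σ : ℝ) (hμ : μ = ∫ x, x ∂P)
    (hσ : σ = Real.sqrt (∫ x, (x - μ) ^ 2 ∂P))
    (α : ℝ) (hα : α ∈ Set.Ico (0 : ℝ) 1) :
    cvar α P ≤ μ + Real.sqrt (α / (1 - α)) * σ := by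
  have h1α : 0 < 1 - α := by linarith [hα.2]
  have hP : MemLp (fun x : ℝ => x) 2 P := (memLp_two_iff_integrable_sq (by fun_prop)).2 hP2
  have hσ_sq : σ ^ 2 = Var[fun x : ℝ => x; P] := by
    rw [hσ, hμ, variance_eq_integral (by fun_prop),
      Real.sq_sqrt (integral_nonneg fun x => sq_nonneg _)]
  have hσ_nonneg : 0 ≤ σ := hσ ▸ Real.sqrt_nonneg _
  have hγσ : Real.sqrt (α / (1 - α)) * σ = 2 * Real.sqrt α * (σ / (2 * Real.sqrt (1 - α))) := by
    rw [Real.sqrt_div' _ h1α.le]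
    field_simp
  have hbound := le_two_mul_of_forall_le_mul_sq_add_sq_div (c := cvar α P - μ)
    (v := σ / (2 * Real.sqrt (1 - α))) (Real.sqrt_nonneg α) (by positivity) fun a ha => by
      rw [div_pow, mul_pow, Real.sq_sqrt hα.1, Real.sq_sqrt h1α.le, hσ_sq, hμ]
      linarith [cvar_le_integral_add_mul_add_div hα hP ha]
  linarith
end

section
/- Let μ ∈ ℝ, σ > 0, and α ∈ (0, 1), and set γ := √(α/(1−α)). Let P be the two-point probability measure on ℝ placing mass α at the point μ − σ√((1−α)/α) and mass 1 − α at the point μ + σγ. Then P has mean μ, variance σ², and CVaR_α(P) = μ + γσ, where CVaR_α(P) := inf over z ∈ ℝ of ( z + (1/(1−α)) ∫ max(x − z, 0) dP(x) ). -/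
open MeasureTheory ProbabilityTheory

/-!
The weights balance the two deviations, `α · σ√((1−α)/α) = (1−α) · σγ = σ√(α(1−α))`, which
gives mean `μ`, and the squared deviations contribute `(1−α)σ²` and `ασ²`. The upper point
`μ + σγ` carries mass `1 − α` and bounds the support, and a law with an atom of mass at least
`1 − α` at its essential supremum `b` has `CVaR_α = b`: every `z` gives at least
`z + (b − z)⁺ ≥ b`, with equality at `z = b`.
-/

theorem Real.mul_sqrt_div_eq_sqrt_mul {p q : ℝ} (hp : 0 ≤ p) (hq : 0 ≤ q) :
    p * √(q / p) = √(p * q) := by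
  rw [Real.sqrt_div hq, Real.sqrt_mul hp, mul_div_left_comm, Real.div_sqrt, mul_comm]

theorem Real.mul_sqrt_div_sq {p q : ℝ} (hp : 0 < p) (hq : 0 ≤ q) : p * √(q / p) ^ 2 = q := by
  rw [Real.sq_sqrt (div_nonneg hq hp.le), mul_div_cancel₀ _ hp.ne']

section Bernoulli

open unitInterval

variable {X : Type*} [MeasurableSpace X]

theorem ProbabilityTheory.ofReal_smul_dirac_add_eq_bernoulliMeasure (x y : X) (p : I) :
    ENNReal.ofReal p • Measure.dirac x + ENNReal.ofReal (1 - p) • Measure.dirac y =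
      Ber(x, y, p) := by
  rw [bernoulliMeasure_def, ← coe_symm_eq, ← coe_toNNReal p, ← coe_toNNReal (σ p),
    ENNReal.ofReal_coe_nnreal, ENNReal.ofReal_coe_nnreal]
  rfl

theorem ProbabilityTheory.ae_bernoulliMeasure [MeasurableSingletonClass X] {x y : X}
    {q : X → Prop} (hx : q x) (hy : q y) (p : I) : ∀ᵐ z ∂Ber(x, y, p), q z := by
  rw [bernoulliMeasure_def, ae_add_measure_iff]
  exact ⟨Measure.ae_smul_measure (by rwa [ae_dirac_eq]) _,
    Measure.ae_smul_measure (by rwa [ae_dirac_eq]) _⟩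

end Bernoulli

theorem cvar_eq_of_ae_le_of_le_measureReal_singleton {α b : ℝ} (hα : α < 1) {P : Measure ℝ}
    [IsFiniteMeasure P] (hP : Integrable id P) (hle : ∀ᵐ x ∂P, x ≤ b)
    (hb : 1 - α ≤ P.real {b}) : cvar α P = b := by
  have h1α : 0 < 1 - α := sub_pos.2 hα
  have lower : ∀ z, b ≤ z + (1 / (1 - α)) * ∫ x, max (x - z) 0 ∂P := by
    intro z
    have hatom : (1 - α) * (b - z) ≤ ∫ x, max (x - z) 0 ∂P :=
      calc (1 - α) * (b - z) ≤ P.real {b} * max (b - z) 0 :=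
            (mul_le_mul_of_nonneg_left (le_max_left _ _) h1α.le).trans
              (mul_le_mul_of_nonneg_right hb (le_max_right _ _))
        _ = ∫ x in {b}, max (x - z) 0 ∂P := by rw [integral_singleton, smul_eq_mul]
        _ ≤ ∫ x, max (x - z) 0 ∂P :=
            setIntegral_le_integral (hP.sub (integrable_const z)).pos_part
              (ae_of_all _ fun _ ↦ le_max_right _ _)
    calc b = z + (1 / (1 - α)) * ((1 - α) * (b - z)) := by field_simp; ring
      _ ≤ z + (1 / (1 - α)) * ∫ x, max (x - z) 0 ∂P := by gcongr
  have hzero : ∫ x, max (x - b) 0 ∂P = 0 :=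
    integral_eq_zero_of_ae (hle.mono fun x hx ↦ max_eq_right (sub_nonpos.2 hx))
  have at_b : b + (1 / (1 - α)) * ∫ x, max (x - b) 0 ∂P = b := by
    rw [hzero, mul_zero, add_zero]
  exact le_antisymm (at_b ▸ ciInf_le ⟨b, Set.forall_mem_range.2 lower⟩ b) (le_ciInf lower)

/-- Tightness of the worst-case CVaR bound over the Chebyshev ambiguity set: for
`μ ∈ ℝ`, `σ > 0`, `α ∈ (0, 1)` and `γ = √(α/(1−α))`, the two-point measure placing mass
`α` at `μ − σ√((1−α)/α)` and mass `1 − α` at `μ + σγ` is a probability measure with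
mean `μ`, variance `σ²`, and `CVaR_α = μ + γσ`. -/
theorem cvar_two_point_attains
    (μ σ α : ℝ) (hσ : 0 < σ) (hα : α ∈ Set.Ioo (0 : ℝ) 1)
    (γ : ℝ) (hγ : γ = Real.sqrt (α / (1 - α)))
    (P : Measure ℝ)
    (hP : P = ENNReal.ofReal α • Measure.dirac (μ - σ * Real.sqrt ((1 - α) / α))
      + ENNReal.ofReal (1 - α) • Measure.dirac (μ + σ * γ)) :
    IsProbabilityMeasure P ∧
      (∫ x, x ∂P) = μ ∧
      (∫ x, (x - μ) ^ 2 ∂P) = σ ^ 2 ∧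
      cvar α P = μ + γ * σ := by
  obtain ⟨hα0, hα1⟩ := hα
  have h1α : 0 < 1 - α := sub_pos.2 hα1
  set s := √((1 - α) / α) with hs
  have hbal : α * s = (1 - α) * γ := by
    rw [hs, hγ, Real.mul_sqrt_div_eq_sqrt_mul hα0.le h1α.le,
      Real.mul_sqrt_div_eq_sqrt_mul h1α.le hα0.le, mul_comm]
  have hs2 : α * s ^ 2 = 1 - α := Real.mul_sqrt_div_sq hα0 h1α.le
  have hγ2 : (1 - α) * γ ^ 2 = α := hγ ▸ Real.mul_sqrt_div_sq h1α hα0.le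
  have hab : μ - σ * s < μ + σ * γ := by
    have hγ0 : 0 < γ := hγ ▸ Real.sqrt_pos.2 (div_pos hα0 h1α)
    linarith [mul_nonneg hσ.le (Real.sqrt_nonneg ((1 - α) / α)), mul_pos hσ hγ0]
  set p : unitInterval := ⟨α, hα0.le, hα1.le⟩
  obtain rfl : P = Ber(μ - σ * s, μ + σ * γ, p) :=
    hP.trans (ofReal_smul_dirac_add_eq_bernoulliMeasure _ _ p)
  refine ⟨inferInstance, ?_, ?_, ?_⟩
  · rw [integral_bernoulliMeasure, smul_eq_mul, smul_eq_mul]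
    linear_combination -σ * hbal
  · rw [integral_bernoulliMeasure, smul_eq_mul, smul_eq_mul]
    linear_combination σ ^ 2 * hs2 + σ ^ 2 * hγ2
  · have hatom : 1 - α ≤ Ber(μ - σ * s, μ + σ * γ, p).real {μ + σ * γ} :=
      (bernoulliMeasure_real_apply_of_notMem_of_mem p (measurableSet_singleton _) hab.ne
        (Set.mem_singleton _)).ge
    rw [cvar_eq_of_ae_le_of_le_measureReal_singleton hα1 (integrable_bernoulliMeasure _ _ _ _)
      (ae_bernoulliMeasure (q := (· ≤ μ + σ * γ)) hab.le le_rfl p) hatom]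
    ring
end
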